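/- arXiv:2502.20618 — 4 statements merged into one kernel-verified Lean document; each statement's English description precedes it below -/
import Mathlib

section
/- Let L/K be a finite Galois extension of fields with Galois group Γ. Let A be a ℤ[Γ]-module that is invertible, i.e. there exist a finite Γ-set S and a ℤ[Γ]-module D such that A ⊕ D is isomorphic as a ℤ[Γ]-module to the free abelian group ℤ[S] on S with the permutation action of Γ. Let Γ act diagonally on A ⊗_ℤ Lˣ (where Lˣ is the multiplicative group of L with its Galois action). Then the group cohomology H¹(Γ, A ⊗_ℤ Lˣ) vanishes. -/
/-!
`A ⊗ Lˣ` is a `Γ`-equivariant retract of `ℤ[S] ⊗ Lˣ ≅ Map(S, Lˣ)`, so it suffices that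
`H¹(Γ, Map(S, Lˣ))` vanishes. By Shapiro's lemma, applied orbit by orbit, a cocycle with values
in `Map(S, Lˣ)` is a coboundary as soon as its restrictions to the stabilizers `Γ_s` are; and
`Γ_s` is the Galois group of `L` over the fixed field of `Γ_s`, so Hilbert 90 applies.
-/

open TensorProduct

/-- The diagonal action of the Galois group `Γ = Gal(L/K)` on `A ⊗_ℤ Lˣ`
(with `Lˣ` written additively), as a ℤ-linear endomorphism for each `σ ∈ Γ`. -/
noncomputable def diagTensorAction (K L : Type*) [Field K] [Field L] [Algebra K L]
    (A : Type*) [AddCommGroup A] [DistribMulAction (L ≃ₐ[K] L) A] (σ : L ≃ₐ[K] L) :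
    TensorProduct ℤ A (Additive Lˣ) →ₗ[ℤ] TensorProduct ℤ A (Additive Lˣ) :=
  TensorProduct.map ((DistribMulAction.toAddMonoidHom A σ).toIntLinearMap)
    (Representation.ofMulDistribMulAction (L ≃ₐ[K] L) Lˣ σ)

open groupCohomology MulAction

def H1Vanishes {G X : Type*} [Mul G] [AddCommGroup X] (ρ : G → X →ₗ[ℤ] X) : Prop :=
  ∀ f : G → X, (∀ σ τ, f (σ * τ) = f σ + ρ σ (f τ)) → ∃ t, ∀ σ, f σ = ρ σ t - t

theorem H1Vanishes.of_retract {G X Y : Type*} [Mul G] [AddCommGroup X] [AddCommGroup Y]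
    {ρX : G → X →ₗ[ℤ] X} {ρY : G → Y →ₗ[ℤ] Y} (ι : X →ₗ[ℤ] Y) (π : Y →ₗ[ℤ] X)
    (hπι : ∀ x, π (ι x) = x) (hι : ∀ σ x, ι (ρX σ x) = ρY σ (ι x))
    (hπ : ∀ σ y, π (ρY σ y) = ρX σ (π y)) (hY : H1Vanishes ρY) : H1Vanishes ρX := by
  intro f hf
  obtain ⟨t, ht⟩ := hY (ι ∘ f) fun σ τ => by simp only [Function.comp_apply, hf, map_add, hι]
  refine ⟨π t, fun σ => ?_⟩
  rw [← hπ, ← map_sub, ← ht, Function.comp_apply, hπι]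

theorem LinearMap.rTensor_map_of_semiconj {R A B M : Type*} [CommSemiring R] [AddCommMonoid A]
    [AddCommMonoid B] [AddCommMonoid M] [Module R A] [Module R B] [Module R M]
    (f : A →ₗ[R] B) {α : A →ₗ[R] A} {β : B →ₗ[R] B} (φ : M →ₗ[R] M) (h : ∀ a, f (α a) = β (f a))
    (x : A ⊗[R] M) : f.rTensor M (map α φ x) = map β φ (f.rTensor M x) := by
  rw [rTensor_map, map_rTensor, show f ∘ₗ α = β ∘ₗ f from LinearMap.ext h]

theorem TensorProduct.finsuppScalarLeft_map_lmapDomain_apply {R M N S S' : Type*} [CommSemiring R]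
    [AddCommMonoid M] [AddCommMonoid N] [Module R M] [Module R N] [DecidableEq S] [DecidableEq S']
    {e : S → S'} (he : Function.Injective e) (φ : M →ₗ[R] N) (y : (S →₀ R) ⊗[R] M) (a : S) :
    finsuppScalarLeft R N S' (map (Finsupp.lmapDomain R R e) φ y) (e a) =
      φ (finsuppScalarLeft R M S y a) := by
  induction y using TensorProduct.induction_on with
  | zero => simp
  | tmul p m => simp [Finsupp.mapDomain_apply he]
  | add x y hx hy => simp only [map_add, Finsupp.add_apply, hx, hy]

section Shapiro

variable {G S M : Type*} [Group G] [MulAction G S] [CommGroup M] [MulDistribMulAction G M]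

lemma isMulCocycle₁_stabilizer {F : G → S → M}
    (hF : ∀ σ τ s, F (σ * τ) s = F σ s * σ • F τ (σ⁻¹ • s)) (r : S) :
    IsMulCocycle₁ fun τ : stabilizer G r => F τ r := by
  intro g h
  have hg : (g : G)⁻¹ • r = r := inv_smul_eq_iff.2 g.2.symm
  change F (g * h : G) r = (g : G) • F h r * F g r
  rw [hF, hg, mul_comm]

lemma smul_div_apply_mul_of_mem_stabilizer {F : G → S → M}
    (hF : ∀ σ τ s, F (σ * τ) s = F σ s * σ • F τ (σ⁻¹ • s)) {r : S} {β : M}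
    (hβ : ∀ τ : stabilizer G r, (τ : G) • β / β = F τ r) (g : G) {τ : G} (hτ : τ • r = r) :
    (g * τ) • β / F (g * τ) ((g * τ) • r) = g • β / F g (g • r) := by
  have hgτ : (g * τ) • r = g • r := by rw [mul_smul, hτ]
  rw [hgτ, hF, inv_smul_smul, ← hβ ⟨τ, hτ⟩, smul_div', ← mul_smul,
    div_mul_eq_div_div_swap, div_div_cancel]

/-- Shapiro's lemma for `Map(S, M)` with the action `(σ • c) s = σ • c (σ⁻¹ • s)`, a 1-cocycle
being written as `F : G → S → M`. -/
theorem exists_smul_div_eq_of_stabilizer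
    (h90 : ∀ (r : S) (f : stabilizer G r → M), IsMulCocycle₁ f → IsMulCoboundary₁ f)
    (F : G → S → M) (hF : ∀ σ τ s, F (σ * τ) s = F σ s * σ • F τ (σ⁻¹ • s)) :
    ∃ c : S → M, ∀ σ s, σ • c (σ⁻¹ • s) / c s = F σ s := by
  choose β hβ using fun r => h90 r _ (isMulCocycle₁_stabilizer hF r)
  let rep : S → S := fun s => (Quotient.mk (orbitRel G S) s).out
  have rep_smul : ∀ σ s, rep (σ • s) = rep s := fun σ s =>
    congrArg Quotient.out (Quotient.sound (mem_orbit s σ))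
  have exists_smul_rep : ∀ s, ∃ γ : G, γ • rep s = s := fun s => by
    obtain ⟨γ, hγ⟩ : rep s ∈ orbit G s := Quotient.mk_out (s := orbitRel G S) s
    exact ⟨γ⁻¹, inv_smul_eq_iff.2 hγ.symm⟩
  choose g hg using exists_smul_rep
  let c : S → M := fun s => g s • β (rep s) / F (g s) s
  have hc : ∀ s γ, γ • rep s = s → γ • β (rep s) / F γ s = c s := by
    intro s γ hγ
    have hτ : ((g s)⁻¹ * γ) • rep s = rep s := by rw [mul_smul, hγ, inv_smul_eq_iff, hg]
    have := smul_div_apply_mul_of_mem_stabilizer hF (hβ (rep s)) (g s) hτ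
    rwa [mul_inv_cancel_left, hγ, hg] at this
  refine ⟨c, fun σ s => ?_⟩
  have hσ : (σ * g (σ⁻¹ • s)) • rep s = s := by
    rw [mul_smul, ← rep_smul σ⁻¹ s, hg, smul_inv_smul]
  rw [← hc s _ hσ, hF]
  simp only [c, rep_smul]
  rw [smul_div', ← mul_smul, div_div_div_cancel_left, mul_div_cancel_right]

end Shapiro

theorem isMulCoboundary₁_of_isMulCocycle₁_of_subgroup {K L : Type*} [Field K] [Field L]
    [Algebra K L] [FiniteDimensional K L] (H : Subgroup (L ≃ₐ[K] L)) (f : H → Lˣ)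
    (hf : IsMulCocycle₁ f) : IsMulCoboundary₁ f := by
  let E := IntermediateField.fixedField H
  have hE : IntermediateField.fixingSubgroup E = H := IntermediateField.fixingSubgroup_fixedField H
  let φ : (L ≃ₐ[E] L) ≃* H :=
    (IntermediateField.fixingSubgroupEquiv E).symm.trans (MulEquiv.subgroupCongr hE)
  have hφ : ∀ (g : L ≃ₐ[E] L) (u : Lˣ), φ g • u = g • u := fun _ _ => rfl
  obtain ⟨β, hβ⟩ := isMulCoboundary₁_of_isMulCocycle₁_of_aut_to_units (f ∘ φ) fun g h => by
    rw [Function.comp_apply, map_mul, hf, hφ]; rfl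
  refine ⟨β, fun g => ?_⟩
  obtain ⟨g, rfl⟩ := φ.surjective g
  rw [hφ]
  exact hβ g

noncomputable def permTensorAction (G S M : Type*) [Monoid G] [MulAction G S] [CommGroup M]
    [MulDistribMulAction G M] (σ : G) :
    (S →₀ ℤ) ⊗[ℤ] Additive M →ₗ[ℤ] (S →₀ ℤ) ⊗[ℤ] Additive M :=
  map (Finsupp.lmapDomain ℤ ℤ (σ • ·)) (Representation.ofMulDistribMulAction G M σ)

theorem h1Vanishes_permTensorAction {G S M : Type*} [Group G] [MulAction G S] [Fintype S]
    [CommGroup M] [MulDistribMulAction G M]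
    (h90 : ∀ (r : S) (f : stabilizer G r → M), IsMulCocycle₁ f → IsMulCoboundary₁ f) :
    H1Vanishes (permTensorAction G S M) := by
  classical
  intro f hf
  let Φ := finsuppScalarLeft ℤ (Additive M) S
  have hΦ : ∀ σ y s, Φ (permTensorAction G S M σ y) s =
      Additive.ofMul (σ • (Φ y (σ⁻¹ • s)).toMul) := by
    intro σ y s
    conv_lhs => rw [← smul_inv_smul σ s]
    exact finsuppScalarLeft_map_lmapDomain_apply (MulAction.injective σ) _ y _
  obtain ⟨c, hc⟩ := exists_smul_div_eq_of_stabilizer h90 (fun σ s => (Φ (f σ) s).toMul)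
    fun σ τ s => by simp only [hf, map_add, Finsupp.add_apply, hΦ, toMul_add, toMul_ofMul]
  refine ⟨Φ.symm (Finsupp.equivFunOnFinite.symm (Additive.ofMul ∘ c)),
    fun σ => Φ.injective (Finsupp.ext fun s => ?_)⟩
  rw [map_sub, Finsupp.sub_apply, hΦ, LinearEquiv.apply_symm_apply]
  simp only [Finsupp.coe_equivFunOnFinite_symm, Function.comp_apply, toMul_ofMul]
  rw [← ofMul_div, hc, ofMul_toMul]

theorem stmt_3_general (K L : Type*) [Field K] [Field L] [Algebra K L]
    [FiniteDimensional K L]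
    (A : Type*) [AddCommGroup A] [DistribMulAction (L ≃ₐ[K] L) A]
    (S : Type*) [Fintype S] [MulAction (L ≃ₐ[K] L) S]
    (D : Type*) [AddCommGroup D] [DistribMulAction (L ≃ₐ[K] L) D]
    (e : (A × D) ≃+ (S →₀ ℤ))
    (he : ∀ (g : L ≃ₐ[K] L) (a : A) (d : D),
      e (g • a, g • d) = Finsupp.mapDomain (fun s => g • s) (e (a, d)))
    (f : (L ≃ₐ[K] L) → TensorProduct ℤ A (Additive Lˣ))
    (hf : ∀ σ τ : L ≃ₐ[K] L, f (σ * τ) = f σ + diagTensorAction K L A σ (f τ)) :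
    ∃ t : TensorProduct ℤ A (Additive Lˣ),
      ∀ σ : L ≃ₐ[K] L, f σ = diagTensorAction K L A σ t - t := by
  let i : A →ₗ[ℤ] S →₀ ℤ := (e.toAddMonoidHom.comp (AddMonoidHom.inl A D)).toIntLinearMap
  let p : (S →₀ ℤ) →ₗ[ℤ] A := ((AddMonoidHom.fst A D).comp e.symm.toAddMonoidHom).toIntLinearMap
  have hpi : p ∘ₗ i = LinearMap.id := LinearMap.ext fun a => by simp [i, p]
  have hi : ∀ (σ : L ≃ₐ[K] L) a, i (σ • a) = Finsupp.mapDomain (σ • ·) (i a) := fun σ a => by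
    simpa [i] using he σ a 0
  have hp : ∀ (σ : L ≃ₐ[K] L) x, p (Finsupp.mapDomain (σ • ·) x) = σ • p x := fun σ x => by
    simpa [p] using congrArg (fun y => (e.symm y).1) (he σ (e.symm x).1 (e.symm x).2).symm
  refine H1Vanishes.of_retract (i.rTensor _) (p.rTensor _) (fun x => ?_)
    (fun σ => LinearMap.rTensor_map_of_semiconj i _ (hi σ))
    (fun σ => LinearMap.rTensor_map_of_semiconj p _ (hp σ))
    (h1Vanishes_permTensorAction fun r => isMulCoboundary₁_of_isMulCocycle₁_of_subgroup _) f hf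
  exact (LinearMap.rTensor_comp_apply (g := p) (f := i) (x := x)).symm.trans
    (by rw [hpi]; exact LinearMap.rTensor_id_apply _ _ x)

/-- Let `L/K` be a finite Galois extension with Galois group `Γ`, and let `A` be an
invertible `ℤ[Γ]`-module: `A ⊕ D ≅ ℤ[S]` for some finite `Γ`-set `S` and some
`ℤ[Γ]`-module `D`, where `ℤ[S]` carries the permutation action.  Then
`H¹(Γ, A ⊗_ℤ Lˣ)` vanishes (for the diagonal action): every 1-cocycle
`f : Γ → A ⊗_ℤ Lˣ` is a coboundary. -/
theorem stmt_3 (K L : Type*) [Field K] [Field L] [Algebra K L]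
    [FiniteDimensional K L] [IsGalois K L]
    (A : Type*) [AddCommGroup A] [DistribMulAction (L ≃ₐ[K] L) A]
    (S : Type*) [Fintype S] [MulAction (L ≃ₐ[K] L) S]
    (D : Type*) [AddCommGroup D] [DistribMulAction (L ≃ₐ[K] L) D]
    (e : (A × D) ≃+ (S →₀ ℤ))
    (he : ∀ (g : L ≃ₐ[K] L) (a : A) (d : D),
      e (g • a, g • d) = Finsupp.mapDomain (fun s => g • s) (e (a, d)))
    (f : (L ≃ₐ[K] L) → TensorProduct ℤ A (Additive Lˣ))
    (hf : ∀ σ τ : L ≃ₐ[K] L, f (σ * τ) = f σ + diagTensorAction K L A σ (f τ)) :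
    ∃ t : TensorProduct ℤ A (Additive Lˣ),
      ∀ σ : L ≃ₐ[K] L, f σ = diagTensorAction K L A σ t - t :=
  stmt_3_general K L A S D e he f hf
end

section
/- Let p be a prime, F a field of characteristic p, and G a finite p-group. Let M be a module over the group algebra F[G]. (a) If there exists x ∈ M with Σ_{g ∈ G} g·x ≠ 0, then M contains an F[G]-submodule isomorphic to F[G] that is a direct summand of M as an F[G]-module. (b) Consequently, if M is indecomposable (M ≠ 0 and M is not the internal direct sum of two nonzero F[G]-submodules) and M is not isomorphic to F[G], then Σ_{g ∈ G} g·x = 0 for every x ∈ M. -/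
/-!
For a `p`-group `G` in characteristic `p`, every nonzero left ideal of `F[G]` contains the trace
element `σ = ∑ g`: the `𝔽_p`-span of the `G`-orbit of a nonzero element is a nonzero finite
`p`-group on which `G` acts, so it has a nonzero fixed point, and the `G`-fixed elements of `F[G]`
are the multiples of `σ`. As `σ u = ε(u) σ`, an element `u` of nonzero augmentation `ε(u)` has
injective right multiplication, hence is a unit.

Given `x` with `σ x ≠ 0`, pick an `F`-linear form `λ` with `λ (σ x) ≠ 0`. Then
`ψ m = ∑ g, λ (g⁻¹ m) g` is `F[G]`-linear with `ε (ψ x) = λ (σ x)`, so `ψ x` is a unit and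
`a ↦ a x` embeds `F[G]` into `M` as a direct summand. In an indecomposable `M` this summand is all
of `M`.
-/

namespace MonoidAlgebra

variable {k G : Type*} [Semiring k] [Group G]

theorem coeff_of_mul (g h : G) (u : MonoidAlgebra k G) :
    (of k G g * u).coeff h = u.coeff (g⁻¹ * h) := by
  rw [of_apply, coeff_single_mul_apply, one_mul]

variable (k G) [Fintype G]

noncomputable def traceElement : MonoidAlgebra k G :=
  ∑ g : G, of k G g

variable {k G}

@[simp]
theorem coeff_traceElement (g : G) : (traceElement k G).coeff g = 1 := by
  classical
  simp [traceElement, coeff_sum]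

theorem traceElement_ne_zero [Nontrivial k] : traceElement k G ≠ 0 := fun h => by
  simpa [h] using coeff_traceElement (k := k) (1 : G)

theorem eq_coeff_one_smul_traceElement {b : MonoidAlgebra k G} (hb : ∀ g : G, of k G g * b = b) :
    b = b.coeff 1 • traceElement k G := by
  ext h
  rw [coeff_smul_apply, coeff_traceElement, smul_eq_mul, mul_one, ← inv_mul_cancel h,
    ← coeff_of_mul, hb]

theorem traceElement_mul (u : MonoidAlgebra k G) :
    traceElement k G * u = (∑ g : G, u.coeff g) • traceElement k G := by
  ext h
  rw [coeff_smul_apply, coeff_traceElement, smul_eq_mul, mul_one, traceElement, Finset.sum_mul,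
    coeff_sum, Finsupp.finsetSum_apply]
  simp only [coeff_of_mul]
  exact Equiv.sum_comp ((Equiv.inv G).trans (Equiv.mulRight h)) u.coeff

end MonoidAlgebra

open MulAction in
theorem IsPGroup.exists_fixed_ne_zero_mem_span_orbit {p : ℕ} [Fact p.Prime] {G : Type*}
    [Group G] [Finite G] (hG : IsPGroup p G) {V : Type*} [AddCommGroup V] [Module (ZMod p) V]
    [DistribMulAction G V] {v : V} (hv : v ≠ 0) :
    ∃ w ∈ Submodule.span (ZMod p) (orbit G v), w ≠ 0 ∧ ∀ g : G, g • w = w := by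
  set W := Submodule.span (ZMod p) (orbit G v)
  have hstable : ∀ (g : G) {w : V}, w ∈ W → g • w ∈ W := by
    intro g w hw
    have himage : DistribSMul.toAddMonoidHom V g '' orbit G v = orbit G v :=
      Set.image_smul.trans (smul_orbit g v)
    have := Submodule.mem_map_of_mem (f := (DistribSMul.toAddMonoidHom V g).toZModLinearMap p) hw
    rwa [Submodule.map_span, AddMonoidHom.coe_toZModLinearMap, himage] at this
  let W' : SubMulAction G V := ⟨W, fun g _ => hstable g⟩
  have : Module.Finite (ZMod p) W := Module.Finite.span_of_finite _ (Set.finite_range _)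
  have : Finite W' := Module.finite_of_finite (ZMod p) (M := W)
  have : Nontrivial W := ⟨⟨⟨v, Submodule.subset_span (mem_orbit_self v)⟩, 0, by simp [hv]⟩⟩
  have hcard : p ∣ Nat.card W' := by
    have := Fintype.ofFinite W
    change p ∣ Nat.card W
    rw [Nat.card_eq_fintype_card, Module.card_eq_pow_finrank (K := ZMod p), ZMod.card]
    exact dvd_pow_self p Module.finrank_pos.ne'
  obtain ⟨⟨w, hwW⟩, hw, hne⟩ := hG.exists_fixed_point_of_prime_dvd_card_of_fixed_point W' hcard
    (a := ⟨0, W.zero_mem⟩) fun g => Subtype.ext (smul_zero g)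
  exact ⟨w, hwW, fun h => hne (Subtype.ext h.symm), fun g => congrArg Subtype.val (hw g)⟩

namespace LinearMap

variable {R M : Type*} [Ring R] [AddCommGroup M] [Module R M]

theorem isCompl_range_ker_of_comp_eq_id {N : Type*} [AddCommGroup N] [Module R N]
    {i : N →ₗ[R] M} {r : M →ₗ[R] N} (h : r ∘ₗ i = id) : IsCompl (range i) (ker r) := by
  have hidem : IsIdempotentElem (i ∘ₗ r) := by
    rw [IsIdempotentElem, Module.End.mul_eq_comp, comp_assoc, ← comp_assoc r, h, id_comp]
  have hr : range r = ⊤ := range_eq_top.2 fun n => ⟨i n, congr($h n)⟩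
  have hi : ker i = ⊥ := ker_eq_bot_of_inverse h
  simpa [range_comp_of_range_eq_top i hr, ker_comp_of_ker_eq_bot r hi] using
    IsIdempotentElem.isCompl hidem

theorem exists_isCompl_linearEquiv_of_isUnit_apply (f : M →ₗ[R] R) {x : M} (hx : IsUnit (f x)) :
    ∃ N : Submodule R M, Nonempty (N ≃ₗ[R] R) ∧ ∃ N' : Submodule R M, IsCompl N N' := by
  obtain ⟨u, hu⟩ := hx
  set i := toSpanSingleton R M x
  set r := toSpanSingleton R R ↑u⁻¹ ∘ₗ f
  have h : r ∘ₗ i = id := by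
    ext
    simp [r, i, ← hu]
  exact ⟨range i, ⟨(LinearEquiv.ofLeftInverse (g := r) fun a => congr($h a)).symm⟩, ker r,
    isCompl_range_ker_of_comp_eq_id h⟩

end LinearMap

theorem Submodule.nonempty_linearEquiv_of_isCompl_of_indecomposable {R M : Type*} [Ring R]
    [Nontrivial R] [AddCommGroup M] [Module R M]
    (hM : ∀ N N' : Submodule R M, IsCompl N N' → N = ⊥ ∨ N' = ⊥) {N N' : Submodule R M}
    (hc : IsCompl N N') (e : N ≃ₗ[R] R) : Nonempty (M ≃ₗ[R] R) := by
  rcases hM N N' hc with rfl | rfl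
  · exact (one_ne_zero (e.symm.injective (Subsingleton.elim _ _))).elim
  · exact ⟨(LinearEquiv.ofTop N (codisjoint_bot.1 hc.codisjoint)).symm.trans e⟩

namespace MonoidAlgebra

open MulAction

variable {p : ℕ} [Fact p.Prime] {G : Type*} [Group G]

theorem exists_fixed_ne_zero_mem_span_singleton {k : Type*} [Ring k] [CharP k p] [Finite G]
    (hG : IsPGroup p G) {M : Type*} [AddCommGroup M] [Module (MonoidAlgebra k G) M] {m : M}
    (hm : m ≠ 0) : ∃ v ∈ (MonoidAlgebra k G ∙ m), v ≠ 0 ∧ ∀ g : G, of k G g • v = v := by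
  let _ : Module (ZMod p) M := AddCommGroup.zmodModule fun x => by
    rw [← Nat.cast_smul_eq_nsmul (MonoidAlgebra k G), natCast_def, CharP.cast_eq_zero,
      single_zero, zero_smul]
  let _ : DistribMulAction G M := DistribMulAction.compHom M (of k G)
  obtain ⟨v, hv, hv0, hfix⟩ := hG.exists_fixed_ne_zero_mem_span_orbit hm
  refine ⟨v, ?_, hv0, hfix⟩
  have horbit : orbit G m ⊆ (MonoidAlgebra k G ∙ m) := by
    rintro _ ⟨g, rfl⟩
    exact Submodule.smul_mem _ _ (Submodule.mem_span_singleton_self m)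
  exact (Submodule.span_le
    (p := AddSubgroup.toZModSubmodule p (MonoidAlgebra k G ∙ m).toAddSubgroup)).2 horbit hv

variable {F : Type*} [Field F] [CharP F p] [Fintype G]

theorem exists_mul_eq_traceElement (hG : IsPGroup p G) {a : MonoidAlgebra F G} (ha : a ≠ 0) :
    ∃ c, c * a = traceElement F G := by
  obtain ⟨v, hv, hv0, hfix⟩ := exists_fixed_ne_zero_mem_span_singleton (k := F) hG ha
  obtain ⟨c, rfl⟩ := Submodule.mem_span_singleton.1 hv
  simp only [smul_eq_mul] at hv0 hfix
  have hb := eq_coeff_one_smul_traceElement hfix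
  have hcoeff : (c * a).coeff 1 ≠ 0 := fun h => hv0 (by rw [hb, h, zero_smul])
  exact ⟨((c * a).coeff 1)⁻¹ • c, by rw [smul_mul_assoc, inv_smul_eq_iff₀ hcoeff, ← hb]⟩

theorem isUnit_of_sum_coeff_ne_zero (hG : IsPGroup p G) {u : MonoidAlgebra F G}
    (hu : ∑ g : G, u.coeff g ≠ 0) : IsUnit u := by
  have hinj : Function.Injective (LinearMap.mulRight F u) := by
    refine (injective_iff_map_eq_zero _).2 fun a hau => by_contra fun ha => ?_
    obtain ⟨c, hc⟩ := exists_mul_eq_traceElement hG ha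
    have hσu : traceElement F G * u = 0 := by
      rw [LinearMap.mulRight_apply] at hau
      rw [← hc, mul_assoc, hau, mul_zero]
    rw [traceElement_mul, smul_eq_zero] at hσu
    exact hσu.elim hu traceElement_ne_zero
  obtain ⟨v, hvu⟩ := LinearMap.injective_iff_surjective.1 hinj 1
  refine ⟨⟨u, v, hinj ?_, hvu⟩, rfl⟩
  simp only [LinearMap.mulRight_apply] at hvu ⊢
  rw [mul_assoc, hvu, mul_one, one_mul]

section

variable {k M : Type*} [CommSemiring k] [AddCommMonoid M] [Module k M]
  [Module (MonoidAlgebra k G) M] [IsScalarTower k (MonoidAlgebra k G) M]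

noncomputable def dualLift (f : M →ₗ[k] k) : M →ₗ[MonoidAlgebra k G] MonoidAlgebra k G :=
  equivariantOfLinearOfComm
    ((coeffLinearEquiv k).symm.toLinearMap ∘ₗ
      (Finsupp.linearEquivFunOnFinite k k G).symm.toLinearMap ∘ₗ
      LinearMap.pi fun g => f ∘ₗ GroupSMul.linearMap k M g⁻¹) fun g m => by
    ext x
    show f (single x⁻¹ (1 : k) • single g (1 : k) • m) = (single g (1 : k) * _).coeff x
    rw [coeff_single_mul_apply, one_mul, smul_smul, single_mul_single, mul_one]
    show _ = f (single (g⁻¹ * x)⁻¹ (1 : k) • m)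
    rw [mul_inv_rev, inv_inv]

theorem coeff_dualLift (f : M →ₗ[k] k) (m : M) (g : G) :
    (dualLift f m).coeff g = f (of k G g⁻¹ • m) := rfl

theorem sum_coeff_dualLift (f : M →ₗ[k] k) (m : M) :
    ∑ g : G, (dualLift f m).coeff g = f (traceElement k G • m) := by
  simp only [coeff_dualLift, traceElement, Finset.sum_smul, ← map_sum]
  exact congrArg f (Equiv.sum_comp (Equiv.inv G) (fun g => of k G g • m))

end

theorem exists_linearMap_isUnit_apply {M : Type*} [AddCommGroup M]
    [Module F M] [Module (MonoidAlgebra F G) M] [IsScalarTower F (MonoidAlgebra F G) M]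
    (hG : IsPGroup p G) {x : M} (hx : traceElement F G • x ≠ 0) :
    ∃ ψ : M →ₗ[MonoidAlgebra F G] MonoidAlgebra F G, IsUnit (ψ x) := by
  obtain ⟨f, hf⟩ : ∃ f : M →ₗ[F] F, f (traceElement F G • x) ≠ 0 := by
    by_contra! h
    exact hx ((Module.forall_dual_apply_eq_zero_iff F _).1 h)
  exact ⟨dualLift f, isUnit_of_sum_coeff_ne_zero hG (by rwa [sum_coeff_dualLift])⟩

theorem exists_isCompl_linearEquiv_of_traceElement_smul_ne_zero {M : Type*} [AddCommGroup M]
    [Module F M] [Module (MonoidAlgebra F G) M] [IsScalarTower F (MonoidAlgebra F G) M]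
    (hG : IsPGroup p G) {x : M} (hx : traceElement F G • x ≠ 0) :
    ∃ N : Submodule (MonoidAlgebra F G) M,
      Nonempty (N ≃ₗ[MonoidAlgebra F G] MonoidAlgebra F G) ∧
      ∃ N' : Submodule (MonoidAlgebra F G) M, IsCompl N N' :=
  let ⟨ψ, hψ⟩ := exists_linearMap_isUnit_apply hG hx
  ψ.exists_isCompl_linearEquiv_of_isUnit_apply hψ

end MonoidAlgebra

/-- Let `p` be a prime, `F` a field of characteristic `p`, `G` a finite `p`-group, and
`M` a module over the group algebra `F[G]`.
(a) If there is `x ∈ M` with `∑ g ∈ G, g • x ≠ 0`, then `M` contains an `F[G]`-submodule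
isomorphic to `F[G]` which is a direct summand of `M`.
(b) Consequently, if `M` is indecomposable and not isomorphic to `F[G]`, then
`∑ g ∈ G, g • x = 0` for every `x ∈ M`. -/
theorem stmt_4 (p : ℕ) [Fact p.Prime] (F : Type*) [Field F] [CharP F p]
    (G : Type*) [Group G] [Fintype G] (hG : IsPGroup p G)
    (M : Type*) [AddCommGroup M] [Module (MonoidAlgebra F G) M] :
    ((∃ x : M, (∑ g : G, (MonoidAlgebra.of F G g : MonoidAlgebra F G) • x) ≠ 0) →
      ∃ N : Submodule (MonoidAlgebra F G) M,
        Nonempty (N ≃ₗ[MonoidAlgebra F G] MonoidAlgebra F G) ∧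
        ∃ N' : Submodule (MonoidAlgebra F G) M, IsCompl N N') ∧
    (Nontrivial M →
      (∀ N N' : Submodule (MonoidAlgebra F G) M, IsCompl N N' → N = ⊥ ∨ N' = ⊥) →
      IsEmpty (M ≃ₗ[MonoidAlgebra F G] MonoidAlgebra F G) →
      ∀ x : M, (∑ g : G, (MonoidAlgebra.of F G g : MonoidAlgebra F G) • x) = 0) := by
  let _ : Module F M := Module.compHom M (algebraMap F (MonoidAlgebra F G))
  have : IsScalarTower F (MonoidAlgebra F G) M := .of_compHom F (MonoidAlgebra F G) M
  have free_summand (x : M) (hx : (∑ g : G, MonoidAlgebra.of F G g • x) ≠ 0) :=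
    MonoidAlgebra.exists_isCompl_linearEquiv_of_traceElement_smul_ne_zero hG
      (show MonoidAlgebra.traceElement F G • x ≠ 0 by
        rwa [MonoidAlgebra.traceElement, Finset.sum_smul])
  refine ⟨fun ⟨x, hx⟩ => free_summand x hx, fun _ hM hnotiso x => by_contra fun hx => ?_⟩
  obtain ⟨N, ⟨e⟩, N', hc⟩ := free_summand x hx
  exact hnotiso.false (Submodule.nonempty_linearEquiv_of_isCompl_of_indecomposable hM hc e).some
end

section
/- With G and M as in the context (M = Ω^{−m}F₂ over the Klein four group), the invariant subspace M^G is the F₂-span of e₁, …, e_{m+1}; moreover, for each of the three subgroups H₁ = ⟨g⟩, H₂ = ⟨h⟩, H₃ = ⟨gh⟩ of order 2, the fixed subspace M^{H_a} also equals the F₂-span of e₁, …, e_{m+1}. -/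
/-- The Klein four group `ℤ/2 × ℤ/2`, written multiplicatively. -/
abbrev K4 : Type := Multiplicative (ZMod 2 × ZMod 2)

/-- The generator `g` of the Klein four group. -/
def kg : K4 := Multiplicative.ofAdd (1, 0)

/-- The generator `h` of the Klein four group. -/
def kh : K4 := Multiplicative.ofAdd (0, 1)

/-- The underlying `F₂`-vector space of the module `Ω^{-m} F₂`: basis vectors
`e₁, …, e_{m+1}` live in the first factor and `e_{m+2}, …, e_{2m+1}` in the second. -/
abbrev MM (m : ℕ) : Type := (Fin (m + 1) → ZMod 2) × (Fin m → ZMod 2)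

/-- The basis vector `e_{j+1}` (for `0 ≤ j ≤ m`, i.e. `e_i` with `1 ≤ i ≤ m+1`). -/
def ea (m : ℕ) (j : Fin (m + 1)) : MM m := (Pi.single j 1, 0)

/-- The basis vector `e_{m+1+(j+1)}` (for `0 ≤ j ≤ m-1`, i.e. `e_{m+1+i}` with `1 ≤ i ≤ m`). -/
def eb (m : ℕ) (j : Fin m) : MM m := (0, Pi.single j 1)

/-!
In the coordinates `M = F₂^{m+1} × F₂^m`, the elements `g`, `h`, `gh` act as shears
`(a, b) ↦ (a + φ b, b)`, where `φ` is `b ↦ (b, 0)`, `b ↦ (0, b)` and their sum respectively.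
A shear fixes exactly the vectors with `φ b = 0`, and all three maps `φ` are injective (the
sum by induction along the coordinates), so each fixed subspace is `{b = 0}`, the span of
`e₁, …, e_{m+1}`. Conversely every element of `G` acts as a shear, so it fixes `{b = 0}`.
-/

open Function

section Shear

variable {R M₁ M₂ : Type*} [Semiring R] [AddCommGroup M₁] [AddCommGroup M₂]
  [Module R M₁] [Module R M₂]

def shear (φ : M₂ →ₗ[R] M₁) : M₁ × M₂ →ₗ[R] M₁ × M₂ :=
  LinearMap.id + LinearMap.inl R M₁ M₂ ∘ₗ φ ∘ₗ LinearMap.snd R M₁ M₂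

@[simp]
lemma shear_apply (φ : M₂ →ₗ[R] M₁) (x : M₁ × M₂) : shear φ x = (x.1 + φ x.2, x.2) := by
  ext <;> simp [shear]

lemma shear_mul_shear (φ ψ : M₂ →ₗ[R] M₁) : shear φ * shear ψ = shear (φ + ψ) := by
  refine LinearMap.ext fun x => ?_
  simp only [Module.End.mul_apply, shear_apply, LinearMap.add_apply, add_right_comm, add_assoc]

lemma shear_apply_eq_self_iff (φ : M₂ →ₗ[R] M₁) (x : M₁ × M₂) : shear φ x = x ↔ φ x.2 = 0 := by
  simp [Prod.ext_iff]

lemma shear_apply_eq_self_iff_of_injective {φ : M₂ →ₗ[R] M₁} (hφ : Injective φ) (x : M₁ × M₂) :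
    shear φ x = x ↔ x.2 = 0 := by
  rw [shear_apply_eq_self_iff, map_eq_zero_iff φ hφ]

end Shear

lemma Function.ExtendByZero.linearMap_single {R ι κ : Type*} [Semiring R] [DecidableEq ι]
    [DecidableEq κ] {s : κ → ι} (hs : Injective s) (j : κ) (a : R) :
    ExtendByZero.linearMap R s (Pi.single j a) = Pi.single (s j) a := by
  funext i
  rw [ExtendByZero.linearMap_apply]
  by_cases hi : ∃ k, s k = i
  · obtain ⟨k, rfl⟩ := hi
    simp [hs.extend_apply, Pi.single_apply, hs.eq_iff]
  · rw [extend_apply' _ _ _ hi, Pi.single_eq_of_ne (fun h => hi ⟨j, h.symm⟩), Pi.zero_apply]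

lemma Fin.injective_extendByZero_castSucc_add_succ (R : Type*) [Ring R] (m : ℕ) :
    Injective (ExtendByZero.linearMap R (Fin.castSucc : Fin m → Fin (m + 1)) +
      ExtendByZero.linearMap R (Fin.succ : Fin m → Fin (m + 1))) := by
  rw [← LinearMap.ker_eq_bot, LinearMap.ker_eq_bot']
  intro b h
  obtain _ | n := m
  · exact Subsingleton.elim _ _
  -- coordinate `i` of `h` reads `b i + b (i - 1) = 0`, with `b (-1) = 0`
  have hb (i : Fin (n + 1)) : b i + extend Fin.succ b 0 i.castSucc = 0 := by
    simpa [(Fin.castSucc_injective _).extend_apply] using congrFun h i.castSucc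
  suffices ∀ i, b i = 0 from funext this
  intro i
  induction i using Fin.induction with
  | zero =>
    have h0 : ¬∃ k, Fin.succ k = (0 : Fin (n + 2)) := fun ⟨k, hk⟩ => Fin.succ_ne_zero k hk
    simpa [extend_apply' _ _ _ h0] using hb 0
  | succ i ih =>
    simpa [← Fin.succ_castSucc, (Fin.succ_injective _).extend_apply, ih] using hb i.succ

lemma eq_shear_extendByZero {R ι κ : Type*} [Ring R] [Finite ι] [Finite κ] [DecidableEq ι]
    [DecidableEq κ] {s : κ → ι} (hs : Injective s)
    (f : (ι → R) × (κ → R) →ₗ[R] (ι → R) × (κ → R))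
    (h₁ : ∀ i, f (Pi.single i 1, 0) = (Pi.single i 1, 0))
    (h₂ : ∀ j, f (0, Pi.single j 1) = (Pi.single (s j) 1, 0) + (0, Pi.single j 1)) :
    f = shear (ExtendByZero.linearMap R s) := by
  ext i : 3
  · simpa using h₁ i
  · simpa [ExtendByZero.linearMap_single hs] using h₂ i

lemma span_range_single_inl {R ι M : Type*} [Semiring R] [Finite ι] [DecidableEq ι]
    [AddCommMonoid M] [Module R M] :
    Submodule.span R (Set.range fun i : ι => ((Pi.single i 1 : ι → R), (0 : M))) =
      LinearMap.ker (LinearMap.snd R (ι → R) M) := by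
  rw [← LinearMap.range_inl, LinearMap.range_eq_map, ← (Pi.basisFun R ι).span_eq,
    Submodule.map_span, ← Set.range_comp]
  simp only [comp_def, Pi.basisFun_apply, LinearMap.inl_apply]

lemma K4.eq_one_or_eq_kg_or_eq_kh_or_eq_kg_mul_kh (γ : K4) :
    γ = 1 ∨ γ = kg ∨ γ = kh ∨ γ = kg * kh := by
  revert γ; decide

lemma mem_span_range_ea_iff {m : ℕ} {x : MM m} :
    x ∈ Submodule.span (ZMod 2) (Set.range (ea m)) ↔ x.2 = 0 := by
  rw [show ea m = fun i => (Pi.single i 1, 0) from rfl, span_range_single_inl]; rfl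

section Klein

variable {R M₁ M₂ : Type*} [CommRing R] [AddCommGroup M₁] [AddCommGroup M₂]
  [Module R M₁] [Module R M₂] (ρ : Representation R K4 (M₁ × M₂)) {φ ψ : M₂ →ₗ[R] M₁}

lemma rep_apply_eq_self_of_snd_eq_zero (hg : ρ kg = shear φ) (hh : ρ kh = shear ψ) (γ : K4)
    {x : M₁ × M₂} (hx : x.2 = 0) : ρ γ x = x := by
  have hshear (χ : M₂ →ₗ[R] M₁) : shear χ x = x := by
    rw [shear_apply_eq_self_iff, hx, map_zero]
  obtain rfl | rfl | rfl | rfl := K4.eq_one_or_eq_kg_or_eq_kh_or_eq_kg_mul_kh γ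
  · rw [map_one, Module.End.one_apply]
  · rw [hg, hshear]
  · rw [hh, hshear]
  · rw [map_mul, hg, hh, shear_mul_shear, hshear]

lemma snd_eq_zero_of_rep_apply_eq_self (hg : ρ kg = shear φ) (hh : ρ kh = shear ψ)
    (hφ : Injective φ) (hψ : Injective ψ) (hφψ : Injective (φ + ψ)) {γ : K4}
    (hγ : γ ∈ ({kg, kh, kg * kh} : Set K4)) {x : M₁ × M₂} (hx : ρ γ x = x) : x.2 = 0 := by
  obtain rfl | rfl | rfl := hγ
  · rwa [hg, shear_apply_eq_self_iff_of_injective hφ] at hx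
  · rwa [hh, shear_apply_eq_self_iff_of_injective hψ] at hx
  · rwa [map_mul, hg, hh, shear_mul_shear, shear_apply_eq_self_iff_of_injective hφψ] at hx

end Klein

theorem stmt_6_general (m : ℕ)
    (ρ : Representation (ZMod 2) K4 (MM m))
    (hga : ∀ j : Fin (m + 1), ρ kg (ea m j) = ea m j)
    (hha : ∀ j : Fin (m + 1), ρ kh (ea m j) = ea m j)
    (hgb : ∀ j : Fin m, ρ kg (eb m j) = ea m j.castSucc + eb m j)
    (hhb : ∀ j : Fin m, ρ kh (eb m j) = ea m j.succ + eb m j) :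
    {x : MM m | ∀ γ : K4, ρ γ x = x}
      = ↑(Submodule.span (ZMod 2) (Set.range (ea m))) ∧
    ∀ γ₀ ∈ ({kg, kh, kg * kh} : Set K4),
      {x : MM m | ∀ γ ∈ Subgroup.zpowers γ₀, ρ γ x = x}
        = ↑(Submodule.span (ZMod 2) (Set.range (ea m))) := by
  have hg := eq_shear_extendByZero (Fin.castSucc_injective m) (ρ kg) hga hgb
  have hh := eq_shear_extendByZero (Fin.succ_injective m) (ρ kh) hha hhb
  have snd_eq_zero {γ₀ : K4} (hγ₀ : γ₀ ∈ ({kg, kh, kg * kh} : Set K4)) {x : MM m}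
      (hx : ρ γ₀ x = x) : x.2 = 0 :=
    snd_eq_zero_of_rep_apply_eq_self ρ hg hh (extend_injective (Fin.castSucc_injective m) 0)
      (extend_injective (Fin.succ_injective m) 0)
      (Fin.injective_extendByZero_castSucc_add_succ _ m) hγ₀ hx
  refine ⟨Set.ext fun x => ?_, fun γ₀ hγ₀ => Set.ext fun x => ?_⟩ <;>
    simp only [Set.mem_ofPred_eq, SetLike.mem_coe, mem_span_range_ea_iff]
  · exact ⟨fun h => snd_eq_zero (by simp) (h kg),
      fun hx γ => rep_apply_eq_self_of_snd_eq_zero ρ hg hh γ hx⟩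
  · exact ⟨fun h => snd_eq_zero hγ₀ (h γ₀ (Subgroup.mem_zpowers γ₀)),
      fun hx γ _ => rep_apply_eq_self_of_snd_eq_zero ρ hg hh γ hx⟩

/-- Let `G = ℤ/2 × ℤ/2` act on `M = Ω^{-m} F₂` by: `g·e_i = e_i` and `h·e_i = e_i` for
`1 ≤ i ≤ m+1`; `g·e_{m+1+i} = e_i + e_{m+1+i}` and `h·e_{m+1+i} = e_{i+1} + e_{m+1+i}`
for `1 ≤ i ≤ m`.  Then the invariants `M^G` are the `F₂`-span of `e₁, …, e_{m+1}`, and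
for each of the three subgroups `H₁ = ⟨g⟩`, `H₂ = ⟨h⟩`, `H₃ = ⟨gh⟩` of order 2, the
fixed subspace `M^{H_a}` also equals the `F₂`-span of `e₁, …, e_{m+1}`. -/
theorem stmt_6 (m : ℕ) (hm : 1 ≤ m)
    (ρ : Representation (ZMod 2) K4 (MM m))
    (hga : ∀ j : Fin (m + 1), ρ kg (ea m j) = ea m j)
    (hha : ∀ j : Fin (m + 1), ρ kh (ea m j) = ea m j)
    (hgb : ∀ j : Fin m, ρ kg (eb m j) = ea m j.castSucc + eb m j)
    (hhb : ∀ j : Fin m, ρ kh (eb m j) = ea m j.succ + eb m j) :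
    {x : MM m | ∀ γ : K4, ρ γ x = x}
      = ↑(Submodule.span (ZMod 2) (Set.range (ea m))) ∧
    ∀ γ₀ ∈ ({kg, kh, kg * kh} : Set K4),
      {x : MM m | ∀ γ ∈ Subgroup.zpowers γ₀, ρ γ x = x}
        = ↑(Submodule.span (ZMod 2) (Set.range (ea m))) :=
  stmt_6_general m ρ hga hha hgb hhb
end

section
/- Let F be a field and n ≥ 1 an integer. Let R = F[u, w] and let N be the R-module with generators e₀, …, e_{n−1} and relations u·e_{i+2} = w·e_i for 0 ≤ i ≤ n−3, w·e_{n−2} = 0, and w·e_{n−1} = 0. Make the quotient ring F[x, z]/(z^n) an R-module via u ↦ x² and w ↦ z². Then the R-module homomorphism N → F[x, z]/(z^n) sending e_i ↦ x^{n−1−i} z^i (0 ≤ i ≤ n−1) is injective, and its image is the F-linear span of the classes of the monomials x^a z^b with 0 ≤ b ≤ n−1, a + b ≥ n−1, and a + b ≡ n−1 (mod 2). -/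
/-!
Over `F`, the module `N` is spanned by the vectors `u^j e_i`: the relations rewrite `w e_i` as
`u e_{i+2}`, or as `0` when `i + 2 ≥ n`. These are sent to the classes of the monomials
`x^(2j+n-1-i) z^i`, which are pairwise distinct and have `z`-degree `< n`, so they are linearly
independent in `F[x, z]/(z^n)`. Hence `f` is injective, and its image is spanned by these
monomials; the exponent pairs `(2j+n-1-i, i)` are exactly the pairs `(a, b)` of the statement.
-/

/-- The polynomial ring `R = F[u, w]`, with `u = X 0` and `w = X 1`
(also used as `F[x, z]`, with `x = X 0` and `z = X 1`). -/
abbrev RR (F : Type*) [Field F] : Type _ := MvPolynomial (Fin 2) F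

/-- The quotient ring `S = F[x, z]/(z^n)`. -/
abbrev SS (F : Type*) [Field F] (n : ℕ) : Type _ :=
  RR F ⧸ Ideal.span {(MvPolynomial.X 1 : RR F) ^ n}

/-- The relations `u·e_{i+2} − w·e_i` (for `0 ≤ i ≤ n−3`), `w·e_{n−2}` and `w·e_{n−1}`
in the free `R`-module on `e₀, …, e_{n−1}`. -/
def relSet (F : Type*) [Field F] (n : ℕ) (hn : 1 ≤ n) : Set (Fin n →₀ RR F) :=
  {z | (∃ (i : ℕ) (h : i + 3 ≤ n),
      z = (MvPolynomial.X 0 : RR F) • Finsupp.single (⟨i + 2, by omega⟩ : Fin n) (1 : RR F)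
        - (MvPolynomial.X 1 : RR F) • Finsupp.single (⟨i, by omega⟩ : Fin n) (1 : RR F)) ∨
    z = (MvPolynomial.X 1 : RR F) • Finsupp.single (⟨n - 2, by omega⟩ : Fin n) (1 : RR F) ∨
    z = (MvPolynomial.X 1 : RR F) • Finsupp.single (⟨n - 1, by omega⟩ : Fin n) (1 : RR F)}

/-- The `R`-module `N` with generators `e₀, …, e_{n−1}` and relations
`u·e_{i+2} = w·e_i` (`0 ≤ i ≤ n−3`), `w·e_{n−2} = 0`, `w·e_{n−1} = 0`. -/
abbrev NN (F : Type*) [Field F] (n : ℕ) (hn : 1 ≤ n) : Type _ :=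
  (Fin n →₀ RR F) ⧸ Submodule.span (RR F) (relSet F n hn)

/-- The generator `e_i` of `N`. -/
noncomputable def en (F : Type*) [Field F] (n : ℕ) (hn : 1 ≤ n) (i : Fin n) : NN F n hn :=
  Submodule.Quotient.mk (Finsupp.single i 1)

/-- The ring homomorphism `R = F[u, w] → S = F[x, z]/(z^n)` sending `u ↦ x²`, `w ↦ z²`. -/
noncomputable def θ (F : Type*) [Field F] (n : ℕ) : RR F →+* SS F n :=
  (Ideal.Quotient.mk (Ideal.span {(MvPolynomial.X 1 : RR F) ^ n})).comp
    (MvPolynomial.aeval (fun j : Fin 2 => (MvPolynomial.X j : RR F) ^ 2)).toRingHom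

open MvPolynomial

def LinearMap.restrictScalarsOfAlgebraMap {A B F M M₂ : Type*} [CommSemiring F] [Semiring A]
    [Semiring B] [Algebra F A] [Algebra F B] [AddCommMonoid M] [AddCommMonoid M₂] [Module A M]
    [Module B M₂] [Module F M] [Module F M₂] [IsScalarTower F A M] [IsScalarTower F B M₂]
    {σ : A →+* B} (f : M →ₛₗ[σ] M₂)
    (hσ : ∀ c : F, σ (algebraMap F A c) = algebraMap F B c) : M →ₗ[F] M₂ where
  toFun := f
  map_add' := f.map_add
  map_smul' c m := by
    rw [← algebraMap_smul A c m, f.map_smulₛₗ, hσ, algebraMap_smul]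
    rfl

theorem LinearMap.injective_of_linearIndependent_comp {R ι M M₂ : Type*} [Ring R]
    [AddCommGroup M] [AddCommGroup M₂] [Module R M] [Module R M₂] {v : ι → M}
    (hv : Submodule.span R (Set.range v) = ⊤) (f : M →ₗ[R] M₂)
    (hf : LinearIndependent R (f ∘ v)) : Function.Injective f := by
  rw [← LinearMap.ker_eq_bot, eq_bot_iff]
  intro m hm
  obtain ⟨l, rfl⟩ : m ∈ LinearMap.range (Finsupp.linearCombination R v) := by
    rw [Finsupp.range_linearCombination, hv]
    trivial
  have hl : l = 0 := linearIndependent_iff.mp hf l (by rwa [← Finsupp.apply_linearCombination])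
  simp [hl]

theorem MvPolynomial.linearIndependent_mk_monomial {R ι τ : Type*} [CommRing R] (k : τ) (n : ℕ)
    {e : ι → τ →₀ ℕ} (he : Function.Injective e) (hlt : ∀ i, e i k < n) :
    LinearIndependent R fun i ↦
      Ideal.Quotient.mk (Ideal.span {(X k : MvPolynomial τ R) ^ n}) (monomial (e i) 1) := by
  set I := Ideal.span {(X k : MvPolynomial τ R) ^ n}
  have hdisj : Disjoint (Submodule.span R (Set.range fun i ↦ monomial (e i) (1 : R)))
      (LinearMap.ker (Ideal.Quotient.mkₐ R I).toLinearMap) := by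
    have hspan : Submodule.span R (Set.range fun i ↦ monomial (e i) (1 : R)) ≤
        restrictSupport R {d | d k < n} := by
      rw [Submodule.span_le]
      rintro _ ⟨i, rfl⟩
      simp [hlt i]
    refine Submodule.disjoint_def.mpr fun p hp hker ↦ ?_
    have hsupp : (p.support : Set (τ →₀ ℕ)) ⊆ {d | d k < n} := hspan hp
    have hI : p ∈ Ideal.span ((fun d ↦ monomial d (1 : R)) '' {Finsupp.single k n}) := by
      rwa [Set.image_singleton, ← X_pow_eq_monomial, ← Ideal.Quotient.eq_zero_iff_mem]
    rw [← support_eq_empty, Finset.eq_empty_iff_forall_notMem]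
    intro d hd
    obtain ⟨_, rfl, hle⟩ := mem_ideal_span_monomial_image.mp hI d hd
    have hge : n ≤ d k := by simpa using hle k
    exact (hsupp hd).not_ge hge
  exact ((basisMonomials τ R).linearIndependent.comp e he).map hdisj

theorem MvPolynomial.smul_mem_of_forall_X_smul_mem {τ F M : Type*} [CommSemiring F]
    [AddCommMonoid M] [Module (MvPolynomial τ F) M] [Module F M]
    [IsScalarTower F (MvPolynomial τ F) M] (P : Submodule F M)
    (hP : ∀ k, ∀ m ∈ P, (X k : MvPolynomial τ F) • m ∈ P) (r : MvPolynomial τ F) {m : M}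
    (hm : m ∈ P) : r • m ∈ P := by
  induction r using MvPolynomial.induction_on generalizing m with
  | C a => simpa only [← algebraMap_eq, algebraMap_smul] using P.smul_mem a hm
  | add p q hp hq => simpa only [add_smul] using P.add_mem (hp hm) (hq hm)
  | mul_X p k hp => simpa only [mul_comm p, mul_smul] using hP k _ (hp hm)

theorem MvPolynomial.linearIndependent_mk_X_zero_pow_mul_X_one_pow {R ι : Type*} [CommRing R]
    (n : ℕ) {a b : ι → ℕ} (hab : Function.Injective fun i ↦ (a i, b i))
    (hb : ∀ i, b i < n) :
    LinearIndependent R fun i ↦ Ideal.Quotient.mk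
      (Ideal.span {(X 1 : MvPolynomial (Fin 2) R) ^ n}) (X 0 ^ a i * X 1 ^ b i) := by
  have hmono : ∀ i, (X 0 ^ a i * X 1 ^ b i : MvPolynomial (Fin 2) R) =
      monomial (Finsupp.single 0 (a i) + Finsupp.single 1 (b i)) 1 := fun i ↦ by
    rw [X_pow_eq_monomial, X_pow_eq_monomial, monomial_mul, mul_one]
  simp only [hmono]
  refine linearIndependent_mk_monomial 1 n (fun i j hij ↦ hab ?_) (by simpa using hb)
  have h0 := DFunLike.congr_fun hij 0
  have h1 := DFunLike.congr_fun hij 1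
  simp only [Finsupp.add_apply, Finsupp.single_apply] at h0 h1
  simp_all

section Presentation

variable (F : Type*) [Field F] (n : ℕ) (hn : 1 ≤ n)

theorem X_one_smul_en (i : Fin n) :
    (X 1 : RR F) • en F n hn i =
      if h : i.val + 2 < n then (X 0 : RR F) • en F n hn ⟨i.val + 2, h⟩ else 0 := by
  split_ifs with h
  · rw [eq_comm, ← sub_eq_zero, en, en, ← Submodule.Quotient.mk_smul,
      ← Submodule.Quotient.mk_smul, ← Submodule.Quotient.mk_sub, Submodule.Quotient.mk_eq_zero]
    exact Submodule.subset_span (Or.inl ⟨i, by omega, rfl⟩)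
  · rw [en, ← Submodule.Quotient.mk_smul, Submodule.Quotient.mk_eq_zero]
    refine Submodule.subset_span (Or.inr ?_)
    rcases (show i.val = n - 2 ∨ i.val = n - 1 by omega) with hi | hi
    · exact Or.inl (congrArg _ (Finsupp.single_left_inj one_ne_zero |>.mpr (Fin.ext hi)))
    · exact Or.inr (congrArg _ (Finsupp.single_left_inj one_ne_zero |>.mpr (Fin.ext hi)))

theorem span_range_en : Submodule.span (RR F) (Set.range (en F n hn)) = ⊤ := by
  have : en F n hn = Submodule.mkQ _ ∘ Finsupp.basisSingleOne := by
    funext i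
    simp [en]
  rw [this, Set.range_comp, Submodule.span_image, Module.Basis.span_eq, Submodule.map_top,
    Submodule.range_mkQ]

noncomputable def powSmulEn (p : ℕ × Fin n) : NN F n hn :=
  (X 0 : RR F) ^ p.1 • en F n hn p.2

theorem X_zero_smul_powSmulEn (p : ℕ × Fin n) :
    (X 0 : RR F) • powSmulEn F n hn p = powSmulEn F n hn (p.1 + 1, p.2) := by
  simp only [powSmulEn, smul_smul, pow_succ']

theorem X_one_smul_powSmulEn (p : ℕ × Fin n) :
    (X 1 : RR F) • powSmulEn F n hn p =
      if h : p.2.val + 2 < n then powSmulEn F n hn (p.1 + 1, ⟨p.2.val + 2, h⟩) else 0 := by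
  rw [powSmulEn, smul_comm, X_one_smul_en]
  split_ifs
  · simp only [powSmulEn, smul_smul, pow_succ]
  · exact smul_zero _

theorem span_range_powSmulEn : Submodule.span F (Set.range (powSmulEn F n hn)) = ⊤ := by
  set P := Submodule.span F (Set.range (powSmulEn F n hn))
  have hX : ∀ k, ∀ m ∈ P, (X k : RR F) • m ∈ P := by
    intro k m hm
    induction hm using Submodule.span_induction with
    | mem _ hx =>
      obtain ⟨p, rfl⟩ := hx
      fin_cases k
      · rw [Fin.zero_eta, X_zero_smul_powSmulEn]
        exact Submodule.subset_span ⟨_, rfl⟩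
      · rw [Fin.mk_one, X_one_smul_powSmulEn]
        split_ifs
        · exact Submodule.subset_span ⟨_, rfl⟩
        · exact P.zero_mem
    | zero => simpa only [smul_zero] using P.zero_mem
    | add x y _ _ hx hy => simpa only [smul_add] using P.add_mem hx hy
    | smul c x _ hx => simpa only [smul_comm _ c] using P.smul_mem c hx
  let P' : Submodule (RR F) (NN F n hn) :=
    { P with smul_mem' := fun r _ hm ↦ smul_mem_of_forall_X_smul_mem P hX r hm }
  have hP' : Submodule.span (RR F) (Set.range (en F n hn)) ≤ P' := by
    rw [Submodule.span_le]
    rintro _ ⟨i, rfl⟩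
    exact Submodule.subset_span ⟨(0, i), by simp [powSmulEn]⟩
  exact Submodule.eq_top_iff'.mpr fun m ↦ hP' (by rw [span_range_en]; trivial)

theorem θ_algebraMap (c : F) : θ F n (algebraMap F (RR F) c) = algebraMap F (SS F n) c := by
  simp only [θ, RingHom.comp_apply, AlgHom.toRingHom_eq_coe, RingHom.coe_coe, AlgHom.commutes]
  rfl

theorem apply_powSmulEn (f : NN F n hn →ₛₗ[θ F n] SS F n)
    (hf : ∀ i : Fin n, f (en F n hn i)
      = Ideal.Quotient.mk (Ideal.span {(MvPolynomial.X 1 : RR F) ^ n})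
          (MvPolynomial.X 0 ^ (n - 1 - i.val) * MvPolynomial.X 1 ^ i.val))
    (p : ℕ × Fin n) :
    f (powSmulEn F n hn p) = Ideal.Quotient.mk (Ideal.span {(X 1 : RR F) ^ n})
      (X 0 ^ (2 * p.1 + (n - 1 - p.2.val)) * X 1 ^ p.2.val) := by
  rw [powSmulEn, f.map_smulₛₗ, hf, θ, RingHom.comp_apply, smul_eq_mul, ← map_mul]
  congr 1
  simp only [AlgHom.toRingHom_eq_coe, RingHom.coe_coe, map_pow, aeval_X]
  ring

end Presentation

theorem range_mk_X_pow_mul_X_pow (F : Type*) [Field F] {n : ℕ} (hn : 1 ≤ n) :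
    Set.range (fun p : ℕ × Fin n ↦ Ideal.Quotient.mk (Ideal.span {(X 1 : RR F) ^ n})
      (X 0 ^ (2 * p.1 + (n - 1 - p.2.val)) * X 1 ^ p.2.val)) =
    {q : SS F n | ∃ a b : ℕ, b ≤ n - 1 ∧ n - 1 ≤ a + b ∧ (a + b) % 2 = (n - 1) % 2 ∧
      q = Ideal.Quotient.mk (Ideal.span {(X 1 : RR F) ^ n}) (X 0 ^ a * X 1 ^ b)} := by
  ext q
  constructor
  · rintro ⟨⟨j, i⟩, rfl⟩
    have := i.isLt
    exact ⟨2 * j + (n - 1 - i), i, by omega, by omega, by omega, rfl⟩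
  · rintro ⟨a, b, hb, hab, hpar, rfl⟩
    refine ⟨((a + b - (n - 1)) / 2, ⟨b, by omega⟩), ?_⟩
    dsimp only
    congr 3
    omega

set_option synthInstance.maxHeartbeats 1000000 in
set_option maxHeartbeats 1000000 in
/-- Let `F` be a field, `n ≥ 1`, `R = F[u, w]`, and `N` the `R`-module with generators
`e₀, …, e_{n−1}` and relations `u·e_{i+2} = w·e_i` (`0 ≤ i ≤ n−3`), `w·e_{n−2} = 0`,
`w·e_{n−1} = 0`.  Make `F[x, z]/(z^n)` an `R`-module via `u ↦ x²`, `w ↦ z²`.  Then the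
`R`-module homomorphism `N → F[x, z]/(z^n)` with `e_i ↦ x^{n−1−i} z^i` is injective,
with image the `F`-linear span of the classes of the monomials `x^a z^b` with
`0 ≤ b ≤ n−1`, `a + b ≥ n−1` and `a + b ≡ n−1 (mod 2)`. -/
theorem stmt_13 (F : Type*) [Field F] (n : ℕ) (hn : 1 ≤ n)
    (f : NN F n hn →ₛₗ[θ F n] SS F n)
    (hf : ∀ i : Fin n, f (en F n hn i)
      = Ideal.Quotient.mk (Ideal.span {(MvPolynomial.X 1 : RR F) ^ n})
          (MvPolynomial.X 0 ^ (n - 1 - i.val) * MvPolynomial.X 1 ^ i.val)) :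
    Function.Injective f ∧
    Set.range f = ↑(Submodule.span F {q : SS F n | ∃ a b : ℕ,
      b ≤ n - 1 ∧ n - 1 ≤ a + b ∧ (a + b) % 2 = (n - 1) % 2 ∧
      q = Ideal.Quotient.mk (Ideal.span {(MvPolynomial.X 1 : RR F) ^ n})
            (MvPolynomial.X 0 ^ a * MvPolynomial.X 1 ^ b)}) := by
  let fF := f.restrictScalarsOfAlgebraMap (θ_algebraMap F n)
  have hfF : fF ∘ powSmulEn F n hn = fun p ↦ Ideal.Quotient.mk (Ideal.span {(X 1 : RR F) ^ n})
      (X 0 ^ (2 * p.1 + (n - 1 - p.2.val)) * X 1 ^ p.2.val) :=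
    funext (apply_powSmulEn F n hn f hf)
  refine ⟨fF.injective_of_linearIndependent_comp (span_range_powSmulEn F n hn) ?_, ?_⟩
  · rw [hfF]
    refine linearIndependent_mk_X_zero_pow_mul_X_one_pow n (fun p q hpq ↦ ?_) fun p ↦ p.2.isLt
    simp only [Prod.mk.injEq] at hpq
    exact Prod.ext (by omega) (Fin.ext hpq.2)
  · calc Set.range f = fF '' (Submodule.span F (Set.range (powSmulEn F n hn))) := by
          rw [span_range_powSmulEn, Submodule.top_coe, Set.image_univ]
          rfl
      _ = Submodule.span F (Set.range (fF ∘ powSmulEn F n hn)) := by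
          rw [Set.range_comp, Submodule.span_image, Submodule.map_coe]
      _ = _ := by rw [hfF, range_mk_X_pow_mul_X_pow F hn]
end
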